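/- arXiv:2601.22411 — 2 statements merged into one kernel-verified Lean document; each statement's English description precedes it below -/
import Mathlib

section
/- Let Γ be a group, G a topological group, and f : Γ → G a map whose defect set D_f is contained in a compact subset of G. Then for every x in the subgroup of G generated by D_f, the conjugacy orbit { f(γ)⁻¹ x f(γ) : γ ∈ Γ } is contained in a compact subset of G. -/
open Pointwise

/-- The defect set of a map `f : Γ → G`:
`D_f = { f(y)⁻¹ f(x)⁻¹ f(xy) : x, y ∈ Γ }`. -/
def defectSet {Γ G : Type*} [Group Γ] [Group G] (f : Γ → G) : Set G :=
  {d | ∃ x y : Γ, d = (f y)⁻¹ * (f x)⁻¹ * f (x * y)}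

/-! Elements whose conjugates by a bounded-defect map stay bounded form a subgroup, so it suffices
to treat a single defect `δ(a, b)`. Its conjugate by `f γ` telescopes into the product of three
defects `δ(b, γ) δ(a, bγ) δ(ab, γ)⁻¹`, which lies in the compact set `K K K⁻¹`. -/

section BoundedConjugates

variable {ι G : Type*} [Group G] [TopologicalSpace G] [IsTopologicalGroup G]

def boundedConjugatesSubgroup (g : ι → G) : Subgroup G where
  carrier := {x | ∃ K : Set G, IsCompact K ∧ ∀ i, (g i)⁻¹ * x * g i ∈ K}
  one_mem' := ⟨{1}, isCompact_singleton, fun i => by simp⟩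
  mul_mem' := by
    rintro x y ⟨K, hK, hxK⟩ ⟨L, hL, hyL⟩
    refine ⟨K * L, hK.mul hL, fun i => ?_⟩
    have hconj : (g i)⁻¹ * (x * y) * g i = ((g i)⁻¹ * x * g i) * ((g i)⁻¹ * y * g i) := by group
    rw [hconj]
    exact Set.mul_mem_mul (hxK i) (hyL i)
  inv_mem' := by
    rintro x ⟨K, hK, hxK⟩
    refine ⟨K⁻¹, hK.inv, fun i => ?_⟩
    have hconj : (g i)⁻¹ * x⁻¹ * g i = ((g i)⁻¹ * x * g i)⁻¹ := by group
    rw [hconj]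
    exact Set.inv_mem_inv.mpr (hxK i)

end BoundedConjugates

section Defect

variable {Γ G : Type*} [Group Γ] [Group G]

def defect (f : Γ → G) (x y : Γ) : G := (f y)⁻¹ * (f x)⁻¹ * f (x * y)

theorem defect_mem_defectSet (f : Γ → G) (x y : Γ) : defect f x y ∈ defectSet f :=
  ⟨x, y, rfl⟩

theorem conj_defect (f : Γ → G) (a b γ : Γ) :
    (f γ)⁻¹ * defect f a b * f γ = defect f b γ * defect f a (b * γ) * (defect f (a * b) γ)⁻¹ := by
  simp only [defect, mul_assoc a b γ]
  group

theorem defectSet_subset_boundedConjugatesSubgroup [TopologicalSpace G] [IsTopologicalGroup G]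
    (f : Γ → G) {K : Set G} (hK : IsCompact K) (hDK : defectSet f ⊆ K) :
    defectSet f ⊆ boundedConjugatesSubgroup f := by
  rintro _ ⟨a, b, rfl⟩
  refine ⟨K * K * K⁻¹, (hK.mul hK).mul hK.inv, fun γ => ?_⟩
  rw [show (f b)⁻¹ * (f a)⁻¹ * f (a * b) = defect f a b from rfl, conj_defect]
  have hmem : ∀ x y, defect f x y ∈ K := fun x y => hDK (defect_mem_defectSet f x y)
  exact Set.mul_mem_mul (Set.mul_mem_mul (hmem _ _) (hmem _ _)) (Set.inv_mem_inv.mpr (hmem _ _))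

end Defect

/-- If the defect set of `f : Γ → G` is bounded, then every element `x` of the group
generated by the defect set has bounded conjugacy orbit under `f(Γ)`. -/
theorem bounded_orbit_of_defect_group {Γ G : Type*} [Group Γ] [Group G]
    [TopologicalSpace G] [IsTopologicalGroup G] (f : Γ → G)
    (hq : ∃ K : Set G, IsCompact K ∧ defectSet f ⊆ K)
    (x : G) (hx : x ∈ Subgroup.closure (defectSet f)) :
    ∃ K : Set G, IsCompact K ∧ ∀ γ : Γ, (f γ)⁻¹ * x * f γ ∈ K := by
  obtain ⟨K, hK, hDK⟩ := hq
  exact (Subgroup.closure_le _).mpr (defectSet_subset_boundedConjugatesSubgroup f hK hDK) hx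
end

section
/- Let Γ be a group, u : Γ → SO(2) a group homomorphism such that u(g₀) ≠ I for some g₀ ∈ Γ, and c : Γ → ℝ² a map such that { c(g h) − u(g) c(h) − c(g) : g, h ∈ Γ } is bounded in ℝ². Define f : Γ → GL_3(ℝ) by f(γ) := [[u(γ), c(γ)], [0, 1]]. Suppose φ : Γ → GL_3(ℝ) is a quasihomomorphism taking values in some commutative subgroup H of the group G of block matrices [[R, v],[0,1]] (R ∈ SO(2), v ∈ ℝ²), and suppose φ is close to f (the set { φ(γ)⁻¹ f(γ) : γ ∈ Γ } is contained in a compact subset of G). Then c(Γ) is bounded in ℝ². -/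
open scoped MatrixGroups
open Matrix

/-- `R ∈ SO(2)`: a 2×2 real matrix with `Rᵀ R = I` and `det R = 1`. -/
def IsSO2 (R : Matrix (Fin 2) (Fin 2) ℝ) : Prop := Rᵀ * R = 1 ∧ R.det = 1

/-- The 3×3 block matrix `[[R, v], [0, 1]]`. -/
def mkAff (R : Matrix (Fin 2) (Fin 2) ℝ) (v : Fin 2 → ℝ) :
    Matrix (Fin 3) (Fin 3) ℝ :=
  Matrix.of fun i j =>
    if hi : (i : ℕ) < 2 then
      if hj : (j : ℕ) < 2 then R ⟨i, hi⟩ ⟨j, hj⟩ else v ⟨i, hi⟩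
    else if (j : ℕ) < 2 then 0 else 1

/-- The subgroup `G = SO(2) ⋉ ℝ²` of `GL_3(ℝ)`, as a subset. -/
def affSO2 : Set (GL (Fin 3) ℝ) :=
  {g | ∃ (R : Matrix (Fin 2) (Fin 2) ℝ) (v : Fin 2 → ℝ),
    IsSO2 R ∧ (g : Matrix (Fin 3) (Fin 3) ℝ) = mkAff R v}

/-! ### Auxiliary lemmas -/

theorem mkAff_mul (R R' : Matrix (Fin 2) (Fin 2) ℝ) (v v' : Fin 2 → ℝ) :
    mkAff R v * mkAff R' v' = mkAff (R * R') (R.mulVec v' + v) := by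
  ext i j
  fin_cases i <;> fin_cases j <;>
    simp [mkAff, Matrix.mul_apply, Fin.sum_univ_three, Matrix.mulVec,
      dotProduct, Fin.sum_univ_two, Fin.isValue]

theorem mkAff_one : mkAff 1 0 = 1 := by
  ext i j
  fin_cases i <;> fin_cases j <;> simp [mkAff, Matrix.one_apply]

/-- The translation part of a 3×3 affine matrix. -/
def vecPart (M : Matrix (Fin 3) (Fin 3) ℝ) : Fin 2 → ℝ :=
  fun i => M ⟨i, by omega⟩ 2

theorem vecPart_mkAff (R : Matrix (Fin 2) (Fin 2) ℝ) (v : Fin 2 → ℝ) :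
    vecPart (mkAff R v) = v := by
  funext i; fin_cases i <;> simp [vecPart, mkAff]

theorem so2_entry_le (R : Matrix (Fin 2) (Fin 2) ℝ) (hR : IsSO2 R)
    (i j : Fin 2) : |R i j| ≤ 1 := by
  have h := congrFun (congrFun hR.1 j) j
  simp [Matrix.mul_apply, Fin.sum_univ_two, Matrix.one_apply, Matrix.transpose_apply] at h
  rw [abs_le]
  have hi : i = 0 ∨ i = 1 := by omega
  rcases hi with hi | hi <;> subst hi <;> constructor <;>
    nlinarith [sq_nonneg (R 0 j + 1), sq_nonneg (R 0 j - 1), sq_nonneg (R 1 j + 1),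
      sq_nonneg (R 1 j - 1), sq_nonneg (R 0 j), sq_nonneg (R 1 j)]

theorem so2_form (R : Matrix (Fin 2) (Fin 2) ℝ) (hR : IsSO2 R) :
    R 0 1 = - R 1 0 ∧ R 1 1 = R 0 0 := by
  obtain ⟨h1, h2⟩ := hR
  have e00 := congrFun (congrFun h1 0) 0
  have e01 := congrFun (congrFun h1 0) 1
  simp [Matrix.mul_apply, Fin.sum_univ_two, Matrix.one_apply, Matrix.transpose_apply] at e00 e01
  rw [Matrix.det_fin_two] at h2
  constructor
  · linear_combination (R 0 0) * e01 - (R 1 0) * h2 - (R 0 1) * e00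
  · linear_combination (-(R 1 1)) * e00 + (R 0 0) * h2 + (R 1 0) * e01

theorem so2_sub_one_det (R : Matrix (Fin 2) (Fin 2) ℝ) (hR : IsSO2 R) (hne : R ≠ 1) :
    (R - 1).det ≠ 0 := by
  obtain ⟨hb, ha⟩ := so2_form R hR
  rw [Matrix.det_fin_two]
  simp only [Matrix.sub_apply, Matrix.one_apply]
  simp only [ha, hb]
  intro h
  norm_num at h
  apply hne
  have h1 : R 0 0 = 1 := by nlinarith [sq_nonneg (R 0 0 - 1), sq_nonneg (R 1 0)]
  have h2 : R 1 0 = 0 := by nlinarith [sq_nonneg (R 0 0 - 1), sq_nonneg (R 1 0)]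
  ext i j; fin_cases i <;> fin_cases j <;> simp [Matrix.one_apply, h1, h2, hb, ha]

theorem so2_transpose {R : Matrix (Fin 2) (Fin 2) ℝ} (hR : IsSO2 R) : IsSO2 Rᵀ :=
  ⟨by rw [Matrix.transpose_transpose]; exact mul_eq_one_comm.mp hR.1,
   by rw [Matrix.det_transpose]; exact hR.2⟩

theorem mulVec_norm_le (A : Matrix (Fin 2) (Fin 2) ℝ) (x : Fin 2 → ℝ) :
    ‖A.mulVec x‖ ≤ (|A 0 0| + |A 0 1| + |A 1 0| + |A 1 1|) * ‖x‖ := by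
  have hx0 : |x 0| ≤ ‖x‖ := by simpa using norm_le_pi_norm x 0
  have hx1 : |x 1| ≤ ‖x‖ := by simpa using norm_le_pi_norm x 1
  have hn : 0 ≤ ‖x‖ := norm_nonneg x
  rw [pi_norm_le_iff_of_nonneg (by positivity)]
  intro i
  have hmv : (A.mulVec x) i = A i 0 * x 0 + A i 1 * x 1 := by
    simp [Matrix.mulVec, dotProduct, Fin.sum_univ_two]
  rw [Real.norm_eq_abs, hmv]
  have h1 : |A i 0 * x 0 + A i 1 * x 1| ≤ |A i 0| * |x 0| + |A i 1| * |x 1| := by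
    calc |A i 0 * x 0 + A i 1 * x 1| ≤ |A i 0 * x 0| + |A i 1 * x 1| := abs_add_le _ _
    _ = |A i 0| * |x 0| + |A i 1| * |x 1| := by rw [abs_mul, abs_mul]
  have hi : i = 0 ∨ i = 1 := by omega
  rcases hi with hi | hi <;> subst hi <;> nlinarith [abs_nonneg (A 0 0), abs_nonneg (A 0 1),
    abs_nonneg (A 1 0), abs_nonneg (A 1 1), abs_nonneg (x 0), abs_nonneg (x 1)]

theorem so2_mulVec_le {R : Matrix (Fin 2) (Fin 2) ℝ} (hR : IsSO2 R) (x : Fin 2 → ℝ) :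
    ‖R.mulVec x‖ ≤ 4 * ‖x‖ := by
  refine (mulVec_norm_le R x).trans ?_
  have := so2_entry_le R hR 0 0
  have := so2_entry_le R hR 0 1
  have := so2_entry_le R hR 1 0
  have := so2_entry_le R hR 1 1
  nlinarith [norm_nonneg x, abs_nonneg (R 0 0), abs_nonneg (R 0 1), abs_nonneg (R 1 0),
    abs_nonneg (R 1 1)]

theorem compact_norm_bdd {E : Type*} [NormedAddCommGroup E] {K : Set E} (hK : IsCompact K) :
    ∃ M : ℝ, ∀ x ∈ K, ‖x‖ ≤ M := by
  obtain ⟨r, hr⟩ := hK.isBounded.subset_closedBall 0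
  exact ⟨r, fun x hx => by simpa [Metric.mem_closedBall, dist_zero_right] using hr hx⟩

theorem glK_vec_bdd {K : Set (GL (Fin 3) ℝ)} (hK : IsCompact K) :
    ∃ M : ℝ, ∀ g ∈ K, ‖vecPart (g : Matrix (Fin 3) (Fin 3) ℝ)‖ ≤ M := by
  have hcont : Continuous fun g : GL (Fin 3) ℝ => vecPart (g : Matrix (Fin 3) (Fin 3) ℝ) := by
    apply continuous_pi
    intro i
    exact Continuous.matrix_elem Units.continuous_val _ _
  obtain ⟨M, hM⟩ := compact_norm_bdd (hK.image hcont)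
  exact ⟨M, fun g hg => hM _ ⟨g, hg, rfl⟩⟩

theorem inv_val_eq {g : GL (Fin 3) ℝ} {m : Matrix (Fin 3) (Fin 3) ℝ}
    (h : (g : Matrix (Fin 3) (Fin 3) ℝ) * m = 1) :
    ((g⁻¹ : GL (Fin 3) ℝ) : Matrix (Fin 3) (Fin 3) ℝ) = m := by
  calc ((g⁻¹ : GL (Fin 3) ℝ) : Matrix (Fin 3) (Fin 3) ℝ)
      = (g⁻¹ : GL (Fin 3) ℝ) * ((g : Matrix (Fin 3) (Fin 3) ℝ) * m) := by rw [h, mul_one]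
    _ = (((g⁻¹ * g : GL (Fin 3) ℝ)) : Matrix (Fin 3) (Fin 3) ℝ) * m := by
        rw [Units.val_mul, mul_assoc]
    _ = m := by rw [inv_mul_cancel, Units.val_one, one_mul]

theorem mkAff_mul_inv {R : Matrix (Fin 2) (Fin 2) ℝ} (v : Fin 2 → ℝ) (hR : IsSO2 R) :
    mkAff R v * mkAff Rᵀ (-(Rᵀ.mulVec v)) = 1 := by
  rw [mkAff_mul]
  have h1 : R * Rᵀ = 1 := mul_eq_one_comm.mp hR.1
  rw [Matrix.mulVec_neg, Matrix.mulVec_mulVec, h1, Matrix.one_mulVec]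
  simp [mkAff_one]

/-- The abelian case: if the quasihomomorphism `f = (u, c)` built from a `u`-quasicocycle
`c` (with `u` non-trivial) is close to a quasihomomorphism `φ` taking values in a
commutative subgroup `H` of `SO(2) ⋉ ℝ²`, then `c(Γ)` is bounded. -/
theorem abelian_case_bounded {Γ : Type*} [Group Γ]
    (u : Γ → Matrix (Fin 2) (Fin 2) ℝ)
    (huhom : ∀ g h : Γ, u (g * h) = u g * u h)
    (huSO : ∀ g : Γ, IsSO2 (u g))
    (hunontriv : ∃ g₀ : Γ, u g₀ ≠ 1)
    (c : Γ → Fin 2 → ℝ)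
    (hqc : ∃ K : Set (Fin 2 → ℝ), IsCompact K ∧
      ∀ g h : Γ, c (g * h) - (u g).mulVec (c h) - c g ∈ K)
    (f : Γ → GL (Fin 3) ℝ)
    (hf : ∀ γ : Γ, (f γ : Matrix (Fin 3) (Fin 3) ℝ) = mkAff (u γ) (c γ))
    (H : Subgroup (GL (Fin 3) ℝ)) (hHG : (H : Set (GL (Fin 3) ℝ)) ⊆ affSO2)
    (hHcomm : ∀ a ∈ H, ∀ b ∈ H, a * b = b * a)
    (φ : Γ → GL (Fin 3) ℝ) (hφH : ∀ γ : Γ, φ γ ∈ H)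
    (hφq : ∃ K : Set (GL (Fin 3) ℝ), IsCompact K ∧ defectSet φ ⊆ K)
    (hclose : ∃ K : Set (GL (Fin 3) ℝ), IsCompact K ∧
      (∀ g ∈ K, g ∈ affSO2) ∧ ∀ γ : Γ, (φ γ)⁻¹ * f γ ∈ K) :
    ∃ K : Set (Fin 2 → ℝ), IsCompact K ∧ ∀ γ : Γ, c γ ∈ K := by
  classical
  -- extract the rotation and translation parts of φ
  have hparts : ∀ γ : Γ, ∃ (R : Matrix (Fin 2) (Fin 2) ℝ) (v : Fin 2 → ℝ),
      IsSO2 R ∧ ((φ γ : GL (Fin 3) ℝ) : Matrix (Fin 3) (Fin 3) ℝ) = mkAff R v :=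
    fun γ => hHG (hφH γ)
  choose S w hSO hval using hparts
  -- inverse of φ γ
  have hinv : ∀ γ : Γ, ((φ γ)⁻¹ : GL (Fin 3) ℝ).val
      = mkAff (S γ)ᵀ (-(((S γ)ᵀ).mulVec (w γ))) := by
    intro γ
    apply inv_val_eq
    rw [hval γ]
    exact mkAff_mul_inv (w γ) (hSO γ)
  -- closeness: ‖c γ - w γ‖ is bounded
  obtain ⟨Kc, hKcCompact, _, hKcmem⟩ := hclose
  obtain ⟨M1, hM1⟩ := glK_vec_bdd hKcCompact
  have hd : ∀ γ : Γ, ‖c γ - w γ‖ ≤ 4 * M1 := by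
    intro γ
    have hvp : vecPart (((φ γ)⁻¹ * f γ : GL (Fin 3) ℝ) : Matrix (Fin 3) (Fin 3) ℝ)
        = ((S γ)ᵀ).mulVec (c γ - w γ) := by
      rw [Units.val_mul, hinv γ, hf γ, mkAff_mul, vecPart_mkAff, Matrix.mulVec_sub]
      abel
    have h1 : ‖((S γ)ᵀ).mulVec (c γ - w γ)‖ ≤ M1 := by
      rw [← hvp]; exact hM1 _ (hKcmem γ)
    have h2 : c γ - w γ = (S γ).mulVec (((S γ)ᵀ).mulVec (c γ - w γ)) := by
      rw [Matrix.mulVec_mulVec, mul_eq_one_comm.mp (hSO γ).1, Matrix.one_mulVec]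
    calc ‖c γ - w γ‖ = ‖(S γ).mulVec (((S γ)ᵀ).mulVec (c γ - w γ))‖ := by rw [← h2]
      _ ≤ 4 * ‖((S γ)ᵀ).mulVec (c γ - w γ)‖ := so2_mulVec_le (hSO γ) _
      _ ≤ 4 * M1 := by linarith
  by_cases hS : ∀ γ : Γ, S γ = 1
  · -- all rotation parts of φ are trivial: use the defect and quasicocycle bounds
    obtain ⟨Kq, hKqCompact, hKqsub⟩ := hφq
    obtain ⟨M2, hM2⟩ := glK_vec_bdd hKqCompact
    have hw : ∀ x y : Γ, ‖w (x * y) - w x - w y‖ ≤ M2 := by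
      intro x y
      have hmem : (φ y)⁻¹ * (φ x)⁻¹ * φ (x * y) ∈ Kq := hKqsub ⟨x, y, rfl⟩
      have hvp : vecPart ((((φ y)⁻¹ * (φ x)⁻¹ * φ (x * y) : GL (Fin 3) ℝ))
          : Matrix (Fin 3) (Fin 3) ℝ) = w (x * y) - w x - w y := by
        rw [Units.val_mul, Units.val_mul, hinv x, hinv y, hval (x * y), hS x, hS y, hS (x * y)]
        rw [Matrix.transpose_one, Matrix.one_mulVec, mkAff_mul, mkAff_mul]
        rw [vecPart_mkAff]
        simp [Matrix.one_mulVec]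
        abel
      rw [← hvp]
      exact hM2 _ hmem
    obtain ⟨Kcc, hKccCompact, hKccmem⟩ := hqc
    obtain ⟨M3, hM3⟩ := compact_norm_bdd hKccCompact
    obtain ⟨g₀, hg₀⟩ := hunontriv
    -- key bound: ‖c h - u g₀ (c h)‖ is uniformly bounded
    have hkey : ∀ h : Γ, ‖c h - (u g₀).mulVec (c h)‖ ≤ M3 + M2 + 12 * M1 := by
      intro h
      have hid : c h - (u g₀).mulVec (c h)
          = (c (g₀ * h) - (u g₀).mulVec (c h) - c g₀) - (w (g₀ * h) - w g₀ - w h)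
            - (c (g₀ * h) - w (g₀ * h)) + (c g₀ - w g₀) + (c h - w h) := by ring
      rw [hid]
      have b1 : ‖c (g₀ * h) - (u g₀).mulVec (c h) - c g₀‖ ≤ M3 := hM3 _ (hKccmem g₀ h)
      have b2 := hw g₀ h
      have b3 := hd (g₀ * h)
      have b4 := hd g₀
      have b5 := hd h
      calc ‖(c (g₀ * h) - (u g₀).mulVec (c h) - c g₀) - (w (g₀ * h) - w g₀ - w h)
            - (c (g₀ * h) - w (g₀ * h)) + (c g₀ - w g₀) + (c h - w h)‖
          ≤ ‖(c (g₀ * h) - (u g₀).mulVec (c h) - c g₀) - (w (g₀ * h) - w g₀ - w h)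
            - (c (g₀ * h) - w (g₀ * h)) + (c g₀ - w g₀)‖ + ‖c h - w h‖ := norm_add_le _ _
        _ ≤ ‖(c (g₀ * h) - (u g₀).mulVec (c h) - c g₀) - (w (g₀ * h) - w g₀ - w h)
            - (c (g₀ * h) - w (g₀ * h))‖ + ‖c g₀ - w g₀‖ + ‖c h - w h‖ := by
            have := norm_add_le ((c (g₀ * h) - (u g₀).mulVec (c h) - c g₀)
              - (w (g₀ * h) - w g₀ - w h) - (c (g₀ * h) - w (g₀ * h))) (c g₀ - w g₀)
            linarith
        _ ≤ ‖(c (g₀ * h) - (u g₀).mulVec (c h) - c g₀) - (w (g₀ * h) - w g₀ - w h)‖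
            + ‖c (g₀ * h) - w (g₀ * h)‖ + ‖c g₀ - w g₀‖ + ‖c h - w h‖ := by
            have := norm_sub_le ((c (g₀ * h) - (u g₀).mulVec (c h) - c g₀)
              - (w (g₀ * h) - w g₀ - w h)) (c (g₀ * h) - w (g₀ * h))
            linarith
        _ ≤ ‖c (g₀ * h) - (u g₀).mulVec (c h) - c g₀‖ + ‖w (g₀ * h) - w g₀ - w h‖
            + ‖c (g₀ * h) - w (g₀ * h)‖ + ‖c g₀ - w g₀‖ + ‖c h - w h‖ := by
            have := norm_sub_le (c (g₀ * h) - (u g₀).mulVec (c h) - c g₀)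
              (w (g₀ * h) - w g₀ - w h)
            linarith
        _ ≤ M3 + M2 + 12 * M1 := by linarith
    -- invert u g₀ - 1
    set A : Matrix (Fin 2) (Fin 2) ℝ := u g₀ - 1 with hA
    have hdet : A.det ≠ 0 := so2_sub_one_det (u g₀) (huSO g₀) hg₀
    have hAinv : A⁻¹ * A = 1 := Matrix.nonsing_inv_mul A (isUnit_iff_ne_zero.mpr hdet)
    set CB : ℝ := |A⁻¹ 0 0| + |A⁻¹ 0 1| + |A⁻¹ 1 0| + |A⁻¹ 1 1| with hCB
    refine ⟨Metric.closedBall 0 (CB * (M3 + M2 + 12 * M1)), isCompact_closedBall _ _, ?_⟩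
    intro γ
    rw [Metric.mem_closedBall, dist_zero_right]
    have h1 : c γ = A⁻¹.mulVec (A.mulVec (c γ)) := by
      rw [Matrix.mulVec_mulVec, hAinv, Matrix.one_mulVec]
    have h2 : A.mulVec (c γ) = -(c γ - (u g₀).mulVec (c γ)) := by
      rw [hA, Matrix.sub_mulVec, Matrix.one_mulVec]; ring
    have h3 : ‖A.mulVec (c γ)‖ ≤ M3 + M2 + 12 * M1 := by
      rw [h2, norm_neg]; exact hkey γ
    have hCBnn : 0 ≤ CB := by positivity
    calc ‖c γ‖ = ‖A⁻¹.mulVec (A.mulVec (c γ))‖ := by rw [← h1]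
      _ ≤ CB * ‖A.mulVec (c γ)‖ := mulVec_norm_le _ _
      _ ≤ CB * (M3 + M2 + 12 * M1) := by
          exact mul_le_mul_of_nonneg_left h3 hCBnn
  · -- some rotation part of φ is nontrivial: H fixes a point, so w is bounded
    push_neg at hS
    obtain ⟨x₀, hx₀⟩ := hS
    -- commutativity gives (S x₀ - 1) (w γ) = (S γ - 1) (w x₀)
    have hcomm : ∀ γ : Γ, (S x₀ - 1).mulVec (w γ) = (S γ - 1).mulVec (w x₀) := by
      intro γ
      have h := hHcomm _ (hφH x₀) _ (hφH γ)
      have h' := congrArg (fun g : GL (Fin 3) ℝ => vecPart (g : Matrix (Fin 3) (Fin 3) ℝ)) h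
      simp only [Units.val_mul, hval x₀, hval γ, mkAff_mul, vecPart_mkAff] at h'
      rw [Matrix.sub_mulVec, Matrix.sub_mulVec, Matrix.one_mulVec, Matrix.one_mulVec]
      linear_combination h'
    set A : Matrix (Fin 2) (Fin 2) ℝ := S x₀ - 1 with hA
    have hdet : A.det ≠ 0 := so2_sub_one_det (S x₀) (hSO x₀) hx₀
    have hAinv : A⁻¹ * A = 1 := Matrix.nonsing_inv_mul A (isUnit_iff_ne_zero.mpr hdet)
    set CB : ℝ := |A⁻¹ 0 0| + |A⁻¹ 0 1| + |A⁻¹ 1 0| + |A⁻¹ 1 1| with hCB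
    have hCBnn : 0 ≤ CB := by positivity
    -- ‖(S γ - 1) (w x₀)‖ ≤ 8 ‖w x₀‖, uniformly in γ
    have hwb : ∀ γ : Γ, ‖w γ‖ ≤ CB * (8 * ‖w x₀‖) := by
      intro γ
      have h1 : w γ = A⁻¹.mulVec (A.mulVec (w γ)) := by
        rw [Matrix.mulVec_mulVec, hAinv, Matrix.one_mulVec]
      have h2 : ‖(S γ - 1).mulVec (w x₀)‖ ≤ 8 * ‖w x₀‖ := by
        refine (mulVec_norm_le _ _).trans ?_
        have e00 := so2_entry_le (S γ) (hSO γ) 0 0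
        have e01 := so2_entry_le (S γ) (hSO γ) 0 1
        have e10 := so2_entry_le (S γ) (hSO γ) 1 0
        have e11 := so2_entry_le (S γ) (hSO γ) 1 1
        have a00 : |(S γ - 1) 0 0| ≤ 2 := by
          simp only [Matrix.sub_apply, Matrix.one_apply]
          norm_num
          rw [abs_sub_comm]
          calc |1 - S γ 0 0| ≤ |(1:ℝ)| + |S γ 0 0| := abs_sub _ _
            _ ≤ 2 := by rw [abs_one]; linarith
        have a01 : |(S γ - 1) 0 1| ≤ 2 := by
          simp only [Matrix.sub_apply, Matrix.one_apply]
          norm_num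
          linarith
        have a10 : |(S γ - 1) 1 0| ≤ 2 := by
          simp only [Matrix.sub_apply, Matrix.one_apply]
          norm_num
          linarith
        have a11 : |(S γ - 1) 1 1| ≤ 2 := by
          simp only [Matrix.sub_apply, Matrix.one_apply]
          norm_num
          rw [abs_sub_comm]
          calc |1 - S γ 1 1| ≤ |(1:ℝ)| + |S γ 1 1| := abs_sub _ _
            _ ≤ 2 := by rw [abs_one]; linarith
        nlinarith [norm_nonneg (w x₀), abs_nonneg ((S γ - 1) 0 0), abs_nonneg ((S γ - 1) 0 1),
          abs_nonneg ((S γ - 1) 1 0), abs_nonneg ((S γ - 1) 1 1)]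
      calc ‖w γ‖ = ‖A⁻¹.mulVec (A.mulVec (w γ))‖ := by rw [← h1]
        _ ≤ CB * ‖A.mulVec (w γ)‖ := mulVec_norm_le _ _
        _ = CB * ‖(S γ - 1).mulVec (w x₀)‖ := by rw [hcomm γ]
        _ ≤ CB * (8 * ‖w x₀‖) := mul_le_mul_of_nonneg_left h2 hCBnn
    refine ⟨Metric.closedBall 0 (4 * M1 + CB * (8 * ‖w x₀‖)), isCompact_closedBall _ _, ?_⟩
    intro γ
    rw [Metric.mem_closedBall, dist_zero_right]
    calc ‖c γ‖ = ‖(c γ - w γ) + w γ‖ := by ring_nf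
      _ ≤ ‖c γ - w γ‖ + ‖w γ‖ := norm_add_le _ _
      _ ≤ 4 * M1 + CB * (8 * ‖w x₀‖) := by
          have := hd γ; have := hwb γ; linarith
end
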